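/- arXiv:0711.2591 — 3 statements merged into one kernel-verified Lean document; each statement's English description precedes it below -/
import Mathlib

section
/- For any infinite cardinal κ, the partial order P_{κ⁺} whose conditions are pairs ⟨X, α⟩ with X ⊆ ^{κ⁺}2, |X| ≤ κ, α < κ⁺, ordered by ⟨Y, β⟩ ≤ ⟨X, α⟩ iff Y ⊇ X, β ≥ α, and every f ∈ Y agrees with some g ∈ X on α, is κ⁺-closed (every decreasing sequence of length < κ⁺ has a lower bound). -/
open Cardinal

/-- A condition of `P_{κ⁺}`: a pair `⟨X, α⟩` with `X ⊆ ^{κ⁺}2` (functions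
`κ⁺ → 2` coded as subsets of the ordinals below `κ⁺`), `|X| ≤ κ`, `α < κ⁺`. -/
def IsPCond (κ : Cardinal) (p : Set (Set Ordinal) × Ordinal) : Prop :=
  (∀ f ∈ p.1, ∀ x ∈ f, x < (Order.succ κ).ord) ∧
  #(p.1) ≤ Cardinal.lift.{1,0} κ ∧ p.2 < (Order.succ κ).ord

/-- `p ≤ q` in `P_{κ⁺}`: `⟨Y, β⟩ ≤ ⟨X, α⟩` iff `Y ⊇ X`, `β ≥ α`, and every
`f ∈ Y` agrees with some `g ∈ X` below `α`. -/
def PCondLE (p q : Set (Set Ordinal) × Ordinal) : Prop :=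
  q.1 ⊆ p.1 ∧ q.2 ≤ p.2 ∧
  ∀ f ∈ p.1, ∃ g ∈ q.1, ∀ ζ < q.2, (ζ ∈ f ↔ ζ ∈ g)

/-- For an infinite cardinal `κ`, the partial order `P_{κ⁺}` is `κ⁺`-closed:
every descending sequence of conditions of length `< κ⁺` has a lower bound. -/
theorem stmt1 (κ : Cardinal) (hκ : ℵ₀ ≤ κ)
    (δ : Ordinal) (hδ : δ < (Order.succ κ).ord)
    (p : Ordinal → Set (Set Ordinal) × Ordinal)
    (hcond : ∀ i < δ, IsPCond κ (p i))
    (hdec : ∀ i j, i ≤ j → j < δ → PCondLE (p j) (p i)) :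
    ∃ q, IsPCond κ q ∧ ∀ i < δ, PCondLE q (p i) := by
  have hreg : (Order.succ κ).IsRegular := isRegular_succ hκ
  have hδκ : δ.card ≤ κ := by
    rw [Cardinal.lt_ord] at hδ
    exact Order.lt_succ_iff.mp hδ
  set X : Set (Set Ordinal) := ⋃ i ∈ Set.Iio δ, (p i).1 with hX
  set β : Ordinal := Ordinal.bsup δ (fun i _ => (p i).2) with hβ
  have hmemX : ∀ f ∈ X, ∃ i < δ, f ∈ (p i).1 := by
    intro f hf
    simp only [hX, Set.mem_iUnion, Set.mem_Iio, exists_prop] at hf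
    exact hf
  refine ⟨⟨X, β⟩, ⟨?_, ?_, ?_⟩, ?_⟩
  · intro f hf x hx
    obtain ⟨i, hi, hfi⟩ := hmemX f hf
    exact (hcond i hi).1 f hfi x hx
  · calc #X ≤ #(Set.Iio δ) * ⨆ i : Set.Iio δ, #((p i).1) :=
        Cardinal.mk_biUnion_le _ _
      _ ≤ Cardinal.lift.{1,0} κ * Cardinal.lift.{1,0} κ := by
        apply mul_le_mul'
        · rw [Ordinal.mk_Iio_ordinal]
          exact Cardinal.lift_le.mpr hδκ
        · apply ciSup_le'
          intro i
          exact (hcond i i.2).2.1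
      _ = Cardinal.lift.{1,0} κ := by
        apply Cardinal.mul_eq_self
        simpa using hκ
  · exact Cardinal.bsup_lt_ord_of_isRegular hreg (Order.lt_succ_iff.mpr hδκ) fun i hi => (hcond i hi).2.2
  · intro i hi
    refine ⟨fun f hf => Set.mem_biUnion hi hf, Ordinal.le_bsup _ i hi, ?_⟩
    intro f hf
    obtain ⟨j, hj, hfj⟩ := hmemX f hf
    rcases le_total i j with h | h
    · obtain ⟨g, hg, hag⟩ := (hdec i j h hj).2.2 f hfj
      exact ⟨g, hg, hag⟩
    · exact ⟨f, (hdec j i h hi).1 hfj, fun ζ _ => Iff.rfl⟩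
end

section
/- For any infinite cardinal κ satisfying 2^κ = κ⁺, the partial order P_{κ⁺} with conditions ⟨X, α⟩ (X ⊆ ^{κ⁺}2 of size ≤ κ, α < κ⁺, ordered as above) has the κ⁺⁺-chain condition: every antichain has size at most κ⁺. -/
open Cardinal

/-- For an infinite cardinal `κ` with `2^κ = κ⁺`, the partial order `P_{κ⁺}`
has the `κ⁺⁺`-chain condition: every antichain has size at most `κ⁺`. -/
theorem stmt2 (κ : Cardinal) (hκ : ℵ₀ ≤ κ) (hGCH : 2 ^ κ = Order.succ κ)
    (A : Set (Set (Set Ordinal) × Ordinal))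
    (hA : ∀ p ∈ A, IsPCond κ p)
    (hanti : ∀ p ∈ A, ∀ q ∈ A, p ≠ q →
      ¬∃ r, IsPCond κ r ∧ PCondLE r p ∧ PCondLE r q) :
    #A ≤ Cardinal.lift.{1,0} (Order.succ κ) := by
  have hκ' : (ℵ₀ : Cardinal.{1}) ≤ Cardinal.lift.{1,0} κ := by
    rw [← lift_aleph0.{1,0}]; exact lift_le.2 hκ
  have hκs : (ℵ₀ : Cardinal.{1}) ≤ Cardinal.lift.{1,0} (Order.succ κ) :=
    hκ'.trans (lift_le.2 (Order.le_succ κ))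
  -- Step 1: injectivity of the restriction map on A
  have key : ∀ p ∈ A, ∀ q ∈ A, p.2 = q.2 →
      (fun f => f ∩ Set.Iio p.2) '' p.1 = (fun f => f ∩ Set.Iio q.2) '' q.1 → p = q := by
    intro p hp q hq h2 h1
    by_contra hne
    apply hanti p hp q hq hne
    obtain ⟨hp1, hp2, hp3⟩ := hA p hp
    obtain ⟨hq1, hq2, hq3⟩ := hA q hq
    refine ⟨(p.1 ∪ q.1, p.2), ⟨?_, ?_, hp3⟩, ?_, ?_⟩
    · rintro f (hf | hf)
      exacts [hp1 f hf, hq1 f hf]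
    · calc #(↥(p.1 ∪ q.1)) ≤ #(↥p.1) + #(↥q.1) := mk_union_le _ _
        _ ≤ Cardinal.lift.{1,0} κ + Cardinal.lift.{1,0} κ := add_le_add hp2 hq2
        _ = Cardinal.lift.{1,0} κ := add_eq_self hκ'
    · refine ⟨Set.subset_union_left, le_refl _, ?_⟩
      rintro f (hf | hf)
      · exact ⟨f, hf, fun ζ _ => Iff.rfl⟩
      · have hmem : f ∩ Set.Iio q.2 ∈ (fun f => f ∩ Set.Iio p.2) '' p.1 := by
          rw [h1]; exact ⟨f, hf, rfl⟩
        obtain ⟨g, hg, hgf⟩ := hmem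
        refine ⟨g, hg, fun ζ hζ => ?_⟩
        have h := Set.ext_iff.mp hgf ζ
        simp only [Set.mem_inter_iff, Set.mem_Iio] at h
        constructor
        · intro hζf; exact (h.mpr ⟨hζf, hζ.trans_le h2.le⟩).1
        · intro hζg; exact (h.mp ⟨hζg, hζ⟩).1
    · refine ⟨Set.subset_union_right, h2.ge, ?_⟩
      rintro f (hf | hf)
      · have hmem : f ∩ Set.Iio p.2 ∈ (fun f => f ∩ Set.Iio q.2) '' q.1 := by
          rw [← h1]; exact ⟨f, hf, rfl⟩
        obtain ⟨g, hg, hgf⟩ := hmem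
        refine ⟨g, hg, fun ζ hζ => ?_⟩
        have h := Set.ext_iff.mp hgf ζ
        simp only [Set.mem_inter_iff, Set.mem_Iio] at h
        constructor
        · intro hζf; exact (h.mpr ⟨hζf, hζ.trans_le h2.ge⟩).1
        · intro hζg; exact (h.mp ⟨hζg, hζ⟩).1
      · exact ⟨f, hf, fun ζ _ => Iff.rfl⟩
  -- Step 2: build the injection into a sigma type
  set T := (α : Set.Iio (Order.succ κ).ord) ×
    {Y : Set (Set Ordinal) // Y ⊆ 𝒫 (Set.Iio α.1) ∧ #Y ≤ Cardinal.lift.{1,0} κ} with hT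
  have hinj : #A ≤ #T := by
    refine ⟨⟨fun p => ⟨⟨p.1.2, (hA p.1 p.2).2.2⟩,
      ⟨(fun f => f ∩ Set.Iio p.1.2) '' p.1.1, ?_, ?_⟩⟩, ?_⟩⟩
    · rintro s ⟨f, _, rfl⟩; exact Set.inter_subset_right
    · exact mk_image_le.trans (hA p.1 p.2).2.1
    · rintro ⟨⟨p1, p2⟩, hp⟩ ⟨⟨q1, q2⟩, hq⟩ h
      obtain ⟨h1, h2⟩ := Sigma.mk.inj_iff.mp h
      have h2' : p2 = q2 := congrArg Subtype.val h1
      subst h2'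
      have himg := congrArg Subtype.val (eq_of_heq h2)
      exact Subtype.ext (key (p1, p2) hp (q1, p2) hq rfl himg)
  refine hinj.trans ?_
  -- Step 3: counting
  have hcount : ∀ α : Set.Iio (Order.succ κ).ord,
      #{Y : Set (Set Ordinal) // Y ⊆ 𝒫 (Set.Iio α.1) ∧ #Y ≤ Cardinal.lift.{1,0} κ} ≤
        Cardinal.lift.{1,0} (Order.succ κ) := by
    intro α
    refine (mk_bounded_subset_le _ _).trans ?_
    have hcard : #(↥(𝒫 (Set.Iio α.1))) ≤ Cardinal.lift.{1,0} (Order.succ κ) := by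
      rw [mk_powerset, Ordinal.mk_Iio_ordinal]
      calc (2 : Cardinal.{1}) ^ Cardinal.lift.{1,0} α.1.card
          ≤ 2 ^ Cardinal.lift.{1,0} κ := by
            refine power_le_power_left two_ne_zero (lift_le.2 ?_)
            have := α.2
            rw [Set.mem_Iio, Cardinal.lt_ord] at this
            exact Order.lt_succ_iff.mp this
        _ = Cardinal.lift.{1,0} (2 ^ κ) := by rw [lift_power]; norm_num
        _ = Cardinal.lift.{1,0} (Order.succ κ) := by rw [hGCH]
    calc max #(↥(𝒫 (Set.Iio α.1))) ℵ₀ ^ Cardinal.lift.{1,0} κ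
        ≤ Cardinal.lift.{1,0} (Order.succ κ) ^ Cardinal.lift.{1,0} κ := by
          refine power_le_power_right (max_le hcard hκs)
      _ = Cardinal.lift.{1,0} (Order.succ κ ^ κ) := (lift_power _ _).symm
      _ = Cardinal.lift.{1,0} (Order.succ κ) := by
          rw [← hGCH, ← power_mul, mul_eq_self hκ]
  calc #T = Cardinal.sum fun α : Set.Iio (Order.succ κ).ord =>
        #{Y : Set (Set Ordinal) // Y ⊆ 𝒫 (Set.Iio α.1) ∧ #Y ≤ Cardinal.lift.{1,0} κ} :=
        mk_sigma _
    _ ≤ Cardinal.sum fun _ : Set.Iio (Order.succ κ).ord =>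
        Cardinal.lift.{1,0} (Order.succ κ) := Cardinal.sum_le_sum _ _ hcount
    _ = #(Set.Iio (Order.succ κ).ord) * Cardinal.lift.{1,0} (Order.succ κ) :=
        sum_const' _ _
    _ = Cardinal.lift.{1,0} (Order.succ κ) * Cardinal.lift.{1,0} (Order.succ κ) := by
        rw [Ordinal.mk_Iio_ordinal, Cardinal.card_ord]
    _ = Cardinal.lift.{1,0} (Order.succ κ) := mul_eq_self hκs
end

section
/- ◊*_λ implies ◊_λ for every regular uncountable cardinal λ: if there is a sequence ⟨D_α : α < λ⟩ with D_α ⊆ P(α), |D_α| ≤ |α|, guessing every X ⊆ λ on a club, then there is a sequence ⟨A_α : α < λ⟩ with A_α ⊆ α such that for every X ⊆ λ, {α : X ∩ α = A_α} is stationary. -/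
open Cardinal

/-- `C` is a closed unbounded subset of the ordinal `l`. -/
def IsClubIn (l : Ordinal) (C : Set Ordinal) : Prop :=
  (∀ x ∈ C, x < l) ∧ (∀ a < l, ∃ b ∈ C, a ≤ b) ∧
  (∀ a < l, a ≠ 0 → (∀ b < a, ∃ c ∈ C, b < c ∧ c < a) → a ∈ C)

/-- `S` is stationary in `l`: it meets every club subset of `l`. -/
def IsStationaryIn (l : Ordinal) (S : Set Ordinal) : Prop :=
  ∀ C, IsClubIn l C → (S ∩ C).Nonempty

/-- `X ∩ α`, the restriction of a set of ordinals to those below `α`. -/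
def restr (X : Set Ordinal) (α : Ordinal) : Set Ordinal := {x ∈ X | x < α}

/-- `D` is a `◊*_l`-sequence. -/
def IsDiamondStarSeq (l : Ordinal) (D : Ordinal → Set (Set Ordinal)) : Prop :=
  (∀ α < l, ∀ s ∈ D α, ∀ x ∈ s, x < α) ∧
  (∀ α < l, #(D α) ≤ Cardinal.lift.{1,0} α.card) ∧
  (∀ X : Set Ordinal, (∀ x ∈ X, x < l) →
    ∃ C, IsClubIn l C ∧ ∀ α ∈ C, restr X α ∈ D α)

/-!
Enumerate each `D α` as `⟨E α ζ : ζ < α⟩` and fix a pairing function `p` on `λ`. Some `ζ < λ`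
makes `A α = {η < α : p ζ η ∈ E α ζ}` a `◊_λ`-sequence. Otherwise choose, for every `ζ`, a set
`X ζ` and a club `C ζ` on which the `ζ`-th candidate never guesses `X ζ`, and code all of them
into `Y = ⋃ ζ, p ζ '' X ζ`. By regularity some `α` is closed under `p`, lies in the diagonal
intersection of the `C ζ` and in a club on which `Y ∩ α ∈ D α`; then `Y ∩ α = E α ζ` for some
`ζ < α`, and decoding gives `X ζ ∩ α = A α` with `α ∈ C ζ`, a contradiction.
-/

open Ordinal Set

theorem Cardinal.IsRegular.exists_closed_under {κ : Cardinal.{u}} (hκ : κ.IsRegular)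
    (hκ₀ : ℵ₀ < κ) (F : Ordinal.{u} → Ordinal.{u} → Ordinal.{u})
    (hF : ∀ ξ < κ.ord, ∀ η < κ.ord, F ξ η < κ.ord) :
    ∃ α < κ.ord, 0 < α ∧ ∀ ξ < α, ∀ η < α, F ξ η < α := by
  let g : Ordinal.{u} → Ordinal.{u} := fun b =>
    max b (⨆ ξ : Iio b, ⨆ η : Iio b, Order.succ (F ξ η))
  have hcof : ℵ₀ < κ.ord.cof := by rwa [hκ.cof_ord]
  have hlim : Order.IsSuccLimit κ.ord := isSuccLimit_ord hκ₀.le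
  have hsup_lt {b : Ordinal.{u}} (hb : b < κ.ord) {f : Iio b → Ordinal.{u}}
      (hf : ∀ i, f i < κ.ord) : ⨆ i, f i < κ.ord := by
    refine lift_iSup_lt_of_lt_cof ?_ hf
    rw [Cardinal.mk_Iio_ordinal, Cardinal.lift_lift, ← lift_cof, hκ.cof_ord, lift_lt]
    exact lt_ord.mp hb
  have hg : ∀ b < κ.ord, g b < κ.ord := fun b hb =>
    max_lt hb <| hsup_lt hb fun ξ => hsup_lt hb fun η =>
      hlim.succ_lt (hF ξ (ξ.2.trans hb) η (η.2.trans hb))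
  have hF_lt_g {b ξ η : Ordinal.{u}} (hξ : ξ < b) (hη : η < b) : F ξ η < g b :=
    calc F ξ η < Order.succ (F ξ η) := Order.lt_succ _
      _ ≤ ⨆ η : Iio b, Order.succ (F ξ η) :=
        Ordinal.le_iSup (fun η : Iio b => Order.succ (F ξ η)) ⟨η, hη⟩
      _ ≤ ⨆ ξ : Iio b, ⨆ η : Iio b, Order.succ (F ξ η) :=
        Ordinal.le_iSup (fun ξ : Iio b => ⨆ η : Iio b, Order.succ (F ξ η)) ⟨ξ, hξ⟩
      _ ≤ g b := le_max_right _ _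
  have hmono : Monotone fun n => g^[n] 1 := fun m n hmn =>
    Function.monotone_iterate_of_id_le (fun b => le_max_left b _) hmn 1
  refine ⟨nfp g 1, nfp_lt_ord hcof hg (one_lt_of_isSuccLimit hlim),
    zero_lt_one.trans_le (le_nfp g 1), fun ξ hξ η hη => ?_⟩
  obtain ⟨m, hm⟩ := lt_nfp_iff.mp hξ
  obtain ⟨n, hn⟩ := lt_nfp_iff.mp hη
  calc F ξ η < g (g^[max m n] 1) :=
        hF_lt_g (hm.trans_le (hmono (le_max_left m n)))
          (hn.trans_le (hmono (le_max_right m n)))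
    _ = g^[max m n + 1] 1 := (Function.iterate_succ_apply' g _ 1).symm
    _ ≤ nfp g 1 := iterate_le_nfp g 1 _

theorem Ordinal.exists_pairing {o : Ordinal.{u}} (ho : ℵ₀ ≤ o.card) :
    ∃ p : Ordinal.{u} → Ordinal.{u} → Ordinal.{u}, (∀ ξ < o, ∀ η < o, p ξ η < o) ∧
      ∀ ξ < o, ∀ η < o, ∀ ξ' < o, ∀ η' < o, p ξ η = p ξ' η' → ξ = ξ' ∧ η = η' := by
  have hsq : #(Iio o × Iio o) = #(Iio o) := by
    rw [mk_prod, Cardinal.lift_id,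
      mul_eq_self (by rw [Cardinal.mk_Iio_ordinal]; exact aleph0_le_lift.mpr ho)]
  obtain ⟨f⟩ := Cardinal.eq.mp hsq
  let val₂ : Iio o × Iio o → Ordinal.{u} × Ordinal.{u} := fun x => (x.1, x.2)
  have hval₂ : Function.Injective val₂ := fun x y h =>
    Prod.ext (Subtype.ext (congrArg Prod.fst h)) (Subtype.ext (congrArg Prod.snd h))
  let p : Ordinal.{u} → Ordinal.{u} → Ordinal.{u} := fun ξ η =>
    Function.extend val₂ (fun x => (f x : Ordinal)) 0 (ξ, η)
  have hp {ξ η : Ordinal.{u}} (hξ : ξ < o) (hη : η < o) : p ξ η = f (⟨ξ, hξ⟩, ⟨η, hη⟩) :=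
    hval₂.extend_apply _ _ (⟨ξ, hξ⟩, ⟨η, hη⟩)
  refine ⟨p, fun ξ hξ η hη => hp hξ hη ▸ (f _).2, fun ξ hξ η hη ξ' hξ' η' hη' h => ?_⟩
  rw [hp hξ hη, hp hξ' hη'] at h
  have := f.injective (Subtype.ext h)
  exact ⟨congrArg (·.1.1) this, congrArg (·.2.1) this⟩

theorem exists_subset_image_Iio_of_mk_le {β : Type v} [Inhabited β] {S : Set β} {o : Ordinal.{u}}
    (h : lift.{u} #S ≤ lift.{v} o.card) : ∃ e : Ordinal.{u} → β, S ⊆ e '' Iio o := by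
  obtain ⟨j⟩ : Nonempty (S ↪ Iio o) := by
    rw [← lift_mk_le', Cardinal.mk_Iio_ordinal, Cardinal.lift_lift]
    simpa using lift_le.{u+1}.mpr h
  have hj : Function.Injective fun s => (j s : Ordinal.{u}) :=
    Subtype.val_injective.comp j.injective
  exact ⟨Function.extend _ (fun s : S => (s : β)) default,
    fun s hs => ⟨j ⟨s, hs⟩, (j _).2, hj.extend_apply _ _ _⟩⟩

theorem IsClubIn.exists_next {l : Ordinal} {C : Set Ordinal} (hC : IsClubIn l C)
    (hl : Order.IsSuccLimit l) : ∃ f : Ordinal → Ordinal, ∀ b < l, f b ∈ C ∧ b < f b := by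
  have h (b : Ordinal) : ∃ c, b < l → c ∈ C ∧ b < c := by
    by_cases hb : b < l
    · obtain ⟨c, hc, hbc⟩ := hC.2.1 _ (hl.succ_lt hb)
      exact ⟨c, fun _ => ⟨hc, (Order.lt_succ b).trans_le hbc⟩⟩
    · exact ⟨0, fun h => absurd h hb⟩
  choose f hf using h
  exact ⟨f, hf⟩

theorem IsClubIn.mem_of_forall_lt {l α : Ordinal} {C : Set Ordinal} (hC : IsClubIn l C)
    {f : Ordinal → Ordinal} (hf : ∀ b < l, f b ∈ C ∧ b < f b) (hαl : α < l) (hα : 0 < α)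
    (hfα : ∀ b < α, f b < α) : α ∈ C :=
  hC.2.2 α hαl hα.ne' fun b hb =>
    ⟨f b, (hf b (hb.trans hαl)).1, (hf b (hb.trans hαl)).2, hfα b hb⟩

theorem Cardinal.IsRegular.exists_mem_diag_closed_under {κ : Cardinal} (hκ : κ.IsRegular)
    (hκ₀ : ℵ₀ < κ) {C₀ : Set Ordinal} (hC₀ : IsClubIn κ.ord C₀) {C : Ordinal → Set Ordinal}
    (hC : ∀ ζ, IsClubIn κ.ord (C ζ)) (p : Ordinal → Ordinal → Ordinal)
    (hp : ∀ ξ < κ.ord, ∀ η < κ.ord, p ξ η < κ.ord) :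
    ∃ α < κ.ord, α ∈ C₀ ∧ (∀ ζ < α, α ∈ C ζ) ∧ ∀ ξ < α, ∀ η < α, p ξ η < α := by
  have hlim := isSuccLimit_ord hκ₀.le
  obtain ⟨e, he⟩ := hC₀.exists_next hlim
  choose d hd using fun ζ => (hC ζ).exists_next hlim
  obtain ⟨α, hακ, hα₀, hα⟩ :=
    hκ.exists_closed_under hκ₀ (fun ξ η => max (e η) (max (d ξ η) (p ξ η))) fun ξ hξ η hη =>
      max_lt (hC₀.1 _ (he η hη).1) (max_lt ((hC ξ).1 _ (hd ξ η hη).1) (hp ξ hξ η hη))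
  simp only [max_lt_iff] at hα
  exact ⟨α, hακ, hC₀.mem_of_forall_lt he hακ hα₀ fun b hb => (hα 0 hα₀ b hb).1,
    fun ζ hζ => (hC ζ).mem_of_forall_lt (hd ζ) hακ hα₀ fun b hb => (hα ζ hζ b hb).2.1,
    fun ξ hξ η hη => (hα ξ hξ η hη).2.2⟩

theorem restr_preimage_restr_biUnion_image {p : Ordinal → Ordinal → Ordinal} {o α ζ : Ordinal}
    {X : Ordinal → Set Ordinal}
    (hinj : ∀ ξ < o, ∀ η < o, ∀ ξ' < o, ∀ η' < o, p ξ η = p ξ' η' → ξ = ξ' ∧ η = η')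
    (hX : ∀ ξ < o, ∀ x ∈ X ξ, x < o) (hαo : α ≤ o) (hα : ∀ ξ < α, ∀ η < α, p ξ η < α)
    (hζ : ζ < α) : restr (p ζ ⁻¹' restr (⋃ ξ < o, p ξ '' X ξ) α) α = restr (X ζ) α := by
  ext η
  simp only [restr, mem_ofPred_eq, mem_preimage, mem_iUnion, mem_image]
  constructor
  · rintro ⟨⟨⟨ξ, hξ, η', hη', heq⟩, -⟩, hη⟩
    obtain ⟨rfl, rfl⟩ :=
      hinj ξ hξ η' (hX ξ hξ η' hη') ζ (hζ.trans_le hαo) η (hη.trans_le hαo) heq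
    exact ⟨hη', hη⟩
  · rintro ⟨hη', hη⟩
    exact ⟨⟨⟨ζ, hζ.trans_le hαo, η, hη', rfl⟩, hα ζ hζ η hη⟩, hη⟩

/-- `◊*_λ` implies `◊_λ` for every regular uncountable `λ`: from a
`◊*_λ`-sequence one obtains `⟨A_α : α < λ⟩` with `A_α ⊆ α` such that for every
`X ⊆ λ` the set `{α < λ : X ∩ α = A_α}` is stationary in `λ`. -/
theorem stmt11 (lam : Cardinal) (hreg : lam.IsRegular) (hunc : ℵ₀ < lam)
    (D : Ordinal → Set (Set Ordinal)) (hD : IsDiamondStarSeq lam.ord D) :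
    ∃ A : Ordinal → Set Ordinal,
      (∀ α < lam.ord, ∀ x ∈ A α, x < α) ∧
      ∀ X : Set Ordinal, (∀ x ∈ X, x < lam.ord) →
        IsStationaryIn lam.ord {α | α < lam.ord ∧ restr X α = A α} := by
  obtain ⟨p, hp, hinj⟩ := exists_pairing (o := lam.ord) (by rw [card_ord]; exact hunc.le)
  choose! E hE using fun α (hα : α < lam.ord) =>
    exists_subset_image_Iio_of_mk_le (S := D α) (o := α)
      (by rw [Cardinal.lift_uzero]; exact hD.2.1 α hα)
  by_contra! hcon
  have hfail (ζ : Ordinal) : ∃ X, (∀ x ∈ X, x < lam.ord) ∧ ∃ C, IsClubIn lam.ord C ∧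
      ∀ α < lam.ord, restr X α = restr (p ζ ⁻¹' E α ζ) α → α ∉ C := by
    obtain ⟨X, hXo, hX⟩ := hcon (fun α => restr (p ζ ⁻¹' E α ζ) α) fun α _ x hx => hx.2
    refine ⟨X, hXo, ?_⟩
    simpa [IsStationaryIn, Set.Nonempty] using hX
  choose X hX C hC hXC using hfail
  obtain ⟨C₀, hC₀, hY⟩ := hD.2.2 (⋃ ξ < lam.ord, p ξ '' X ξ) (by
    simp only [mem_iUnion, mem_image]
    rintro _ ⟨ξ, hξ, η, hη, rfl⟩
    exact hp ξ hξ η (hX ξ η hη))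
  obtain ⟨α, hαo, hαC₀, hαC, hαp⟩ := hreg.exists_mem_diag_closed_under hunc hC₀ hC p hp
  obtain ⟨ζ, hζ, hEζ⟩ := hE α hαo (hY α hαC₀)
  refine hXC ζ α hαo ?_ (hαC ζ hζ)
  rw [hEζ, restr_preimage_restr_biUnion_image hinj (fun ξ _ => hX ξ) hαo.le hαp hζ]
end
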